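/- arXiv:2404.11997 — 5 statements merged into one kernel-verified Lean document; each statement's English description precedes it below -/
import Mathlib

section
/- Let R be a commutative ring and d : R → R a derivation (an additive map satisfying the Leibniz rule d(xy) = d(x)y + x d(y)). Let I and A be finite index types and let θ : I → R, λ : I → R, S : I → A → R and T : I → I → R be families of elements of R. Assume condition (A): for every a ∈ A, ∑_{k ∈ I} θ k * S k a = 0, and condition (B): for every i ∈ I, d(θ i) + ∑_{k ∈ I} θ k * T k i + λ i = 0. Then for every a ∈ A, ∑_{k ∈ I} (d(S k a) − ∑_{i ∈ I} T k i * S i a) * θ k = ∑_{i ∈ I} λ i * S i a. -/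
/-- Proposition 4.6 of the paper, abstracted: from the algebraic condition (A) and the
PDE condition (B) one derives a further algebraic condition on `θ`. Here `d` is a
derivation of a commutative ring `R`. -/
theorem extra_algebraic_condition
    {R : Type*} [CommRing R] (d : R → R)
    (hd_add : ∀ x y : R, d (x + y) = d x + d y)
    (hd_mul : ∀ x y : R, d (x * y) = d x * y + x * d y)
    {I A : Type*} [Fintype I] [Fintype A]
    (θ lam : I → R) (S : I → A → R) (T : I → I → R)
    (hA : ∀ a : A, ∑ k, θ k * S k a = 0)
    (hB : ∀ i : I, d (θ i) + (∑ k, θ k * T k i) + lam i = 0) :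
    ∀ a : A, ∑ k, (d (S k a) - ∑ i, T k i * S i a) * θ k = ∑ i, lam i * S i a := by
  intro a
  set D : R →+ R := AddMonoidHom.mk' d hd_add with hD
  have hDd : ∀ x : R, D x = d x := fun x => rfl
  -- apply the derivation to condition (A)
  have h0 : ∑ k, (d (θ k) * S k a + θ k * d (S k a)) = 0 := by
    calc ∑ k, (d (θ k) * S k a + θ k * d (S k a))
        = ∑ k, D (θ k * S k a) := by
          refine Finset.sum_congr rfl fun k _ => ?_
          rw [hDd, hd_mul]
      _ = D (∑ k, θ k * S k a) := (map_sum D _ _).symm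
      _ = 0 := by rw [hA a, map_zero]
  have h0' : (∑ k, d (θ k) * S k a) + ∑ k, θ k * d (S k a) = 0 := by
    rw [← Finset.sum_add_distrib]; exact h0
  -- multiply condition (B) by S i a and sum
  have hBsum : ∑ i, (d (θ i) + (∑ k, θ k * T k i) + lam i) * S i a = 0 := by
    simp [hB]
  have hBsum' : (∑ i, d (θ i) * S i a) + (∑ i, (∑ k, θ k * T k i) * S i a)
      + ∑ i, lam i * S i a = 0 := by
    rw [← Finset.sum_add_distrib, ← Finset.sum_add_distrib]
    rw [← hBsum]
    exact Finset.sum_congr rfl fun i _ => by ring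
  -- swap the double sum
  have hswap : ∑ k, ∑ i, T k i * S i a * θ k = ∑ i, (∑ k, θ k * T k i) * S i a := by
    rw [Finset.sum_comm]
    refine Finset.sum_congr rfl fun i _ => ?_
    rw [Finset.sum_mul]
    exact Finset.sum_congr rfl fun k _ => by ring
  -- expand the left-hand side of the goal
  have e1 : ∑ k, (d (S k a) - ∑ i, T k i * S i a) * θ k
      = (∑ k, θ k * d (S k a)) - ∑ k, ∑ i, T k i * S i a * θ k := by
    rw [← Finset.sum_sub_distrib]
    refine Finset.sum_congr rfl fun k _ => ?_
    rw [sub_mul, Finset.sum_mul, mul_comm]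
  rw [e1, hswap]
  linear_combination h0' - hBsum'
end

section
/- Let ι be a finite type and let N : ℝ → Matrix ι ι ℝ, λ : ℝ → (ι → ℝ) and θ, h, W : ℝ → (ι → ℝ). Assume that for every t ∈ ℝ (derivatives taken in the finite-dimensional space ι → ℝ): θ has derivative (N t)ᵀ.mulVec (θ t) − λ t at t, h has derivative (N t)ᵀ.mulVec (h t) + λ t at t, and W has derivative −(N t).mulVec (W t) at t. Then for every t ∈ ℝ, the dot product (θ t + h t) ⬝ᵥ (W t) equals (θ 0 + h 0) ⬝ᵥ (W 0). In particular, if h 0 = 0 then θ t ⬝ᵥ W t + h t ⬝ᵥ W t = θ 0 ⬝ᵥ W 0 for all t. -/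
/-! The λ-terms cancel in the sum, so `θ + h` solves the adjoint equation `u' = Nᵀ u` of the
equation `W' = -N W`, and the pairing of solutions of mutually adjoint linear equations has zero
derivative. -/

open Matrix

theorem HasDerivAt.dotProduct {ι : Type*} [Fintype ι] {u v : ℝ → ι → ℝ} {u' v' : ι → ℝ}
    {t : ℝ} (hu : HasDerivAt u u' t) (hv : HasDerivAt v v' t) :
    HasDerivAt (fun s => u s ⬝ᵥ v s) (u' ⬝ᵥ v t + u t ⬝ᵥ v') t := by
  rw [hasDerivAt_pi] at hu hv
  have hsum := HasDerivAt.fun_sum (u := Finset.univ) fun i _ => (hu i).fun_mul (hv i)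
  rw [Finset.sum_add_distrib] at hsum
  exact hsum

theorem transpose_mulVec_dotProduct_add_dotProduct_neg_mulVec {ι R : Type*} [Fintype ι]
    [CommRing R] (A : Matrix ι ι R) (x w : ι → R) :
    Aᵀ *ᵥ x ⬝ᵥ w + x ⬝ᵥ -(A *ᵥ w) = 0 := by
  rw [mulVec_transpose, dotProduct_neg, dotProduct_mulVec, add_neg_cancel]

theorem dotProduct_eq_of_hasDerivAt_transpose_neg {ι : Type*} [Fintype ι]
    (N : ℝ → Matrix ι ι ℝ) {u w : ℝ → ι → ℝ}
    (hu : ∀ t, HasDerivAt u ((N t)ᵀ *ᵥ u t) t) (hw : ∀ t, HasDerivAt w (-(N t *ᵥ w t)) t)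
    (s t : ℝ) : u t ⬝ᵥ w t = u s ⬝ᵥ w s := by
  have hderiv : ∀ t, HasDerivAt (fun s => u s ⬝ᵥ w s) 0 t := fun t => by
    simpa only [transpose_mulVec_dotProduct_add_dotProduct_neg_mulVec] using
      (hu t).dotProduct (hw t)
  exact is_const_of_deriv_eq_zero (fun t => (hderiv t).differentiableAt)
    (fun t => (hderiv t).deriv) t s

/-- The conservation law at the heart of Proposition 6.3 of the paper: along a
nonholonomic trajectory, the quantity `(θ + h) ⬝ᵥ W` is constant in time. -/
theorem conservation_law
    {ι : Type*} [Fintype ι]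
    (N : ℝ → Matrix ι ι ℝ) (lam θ h W : ℝ → ι → ℝ)
    (hθ : ∀ t : ℝ, HasDerivAt θ ((N t)ᵀ.mulVec (θ t) - lam t) t)
    (hh : ∀ t : ℝ, HasDerivAt h ((N t)ᵀ.mulVec (h t) + lam t) t)
    (hW : ∀ t : ℝ, HasDerivAt W (-(N t).mulVec (W t)) t) :
    (∀ t : ℝ, (θ t + h t) ⬝ᵥ W t = (θ 0 + h 0) ⬝ᵥ W 0) ∧
      (h 0 = 0 → ∀ t : ℝ, θ t ⬝ᵥ W t + h t ⬝ᵥ W t = θ 0 ⬝ᵥ W 0) := by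
  have hθh : ∀ t, HasDerivAt (θ + h) ((N t)ᵀ *ᵥ (θ + h) t) t := fun t => by
    simpa only [Pi.add_apply, mulVec_add, sub_add_add_cancel] using (hθ t).add (hh t)
  have hconst := dotProduct_eq_of_hasDerivAt_transpose_neg N hθh hW 0
  refine ⟨hconst, fun h0 t => ?_⟩
  simpa only [Pi.add_apply, add_dotProduct, h0, zero_dotProduct, add_zero] using hconst t
end

section
/- Let m, m₀, J, J₂, R, c be strictly positive real numbers and let ℓ ≥ 0. Define K = m₀·ℓ·R³/(4c²), P = J₂ + R²m/4 + R²J/(4c²) and Q = R²J/(4c²) − R²m/4. Then 4K²c² + (Q² − P²)R² = 0 if and only if ℓ = Real.sqrt ((R²m + 2J₂)·(JR² + 2J₂c²)) / (m₀R²). -/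
/-!
Since `P - Q = J₂ + R²m/2` and `P + Q = J₂ + R²J/(2c²)`, one has
`P² - Q² = (R²m + 2J₂)(JR² + 2J₂c²)/(4c²)`, while `4K²c² = (m₀R²ℓ)²/(4c²)`. Hence the
condition is `R²/(4c²)` times `(m₀R²ℓ)² - (R²m + 2J₂)(JR² + 2J₂c²)`, and for `ℓ ≥ 0` the
vanishing of the latter singles out the positive square root.
-/

lemma eq_sqrt_div_iff_sq_mul_eq {x d A : ℝ} (hx : 0 ≤ x) (hd : 0 < d) (hA : 0 ≤ A) :
    x = √A / d ↔ (d * x) ^ 2 = A := by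
  rw [eq_div_iff hd.ne', eq_comm, Real.sqrt_eq_iff_eq_sq hA (by positivity), mul_comm, eq_comm]

lemma carriage_condition_eq (m m₀ J J₂ R c ℓ : ℝ) (hc : c ≠ 0) :
    4 * (m₀ * ℓ * R ^ 3 / (4 * c ^ 2)) ^ 2 * c ^ 2 +
        ((R ^ 2 * J / (4 * c ^ 2) - R ^ 2 * m / 4) ^ 2 -
          (J₂ + R ^ 2 * m / 4 + R ^ 2 * J / (4 * c ^ 2)) ^ 2) * R ^ 2 =
      R ^ 2 / (4 * c ^ 2) *
        ((m₀ * R ^ 2 * ℓ) ^ 2 - (R ^ 2 * m + 2 * J₂) * (J * R ^ 2 + 2 * J₂ * c ^ 2)) := by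
  field_simp
  ring

/-- The algebraic classification from Section 8.2 of the paper for the two-wheeled
carriage: the condition `4K²c² + (Q² − P²)R² = 0` holds iff the distance `ℓ` takes the
distinguished value `√((R²m + 2J₂)(JR² + 2J₂c²))/(m₀R²)`. -/
theorem carriage_ell_classification
    (m m₀ J J₂ R c ℓ K P Q : ℝ)
    (hm : 0 < m) (hm₀ : 0 < m₀) (hJ : 0 < J) (hJ₂ : 0 < J₂)
    (hR : 0 < R) (hc : 0 < c) (hℓ : 0 ≤ ℓ)
    (hK : K = m₀ * ℓ * R ^ 3 / (4 * c ^ 2))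
    (hP : P = J₂ + R ^ 2 * m / 4 + R ^ 2 * J / (4 * c ^ 2))
    (hQ : Q = R ^ 2 * J / (4 * c ^ 2) - R ^ 2 * m / 4) :
    4 * K ^ 2 * c ^ 2 + (Q ^ 2 - P ^ 2) * R ^ 2 = 0 ↔
      ℓ = Real.sqrt ((R ^ 2 * m + 2 * J₂) * (J * R ^ 2 + 2 * J₂ * c ^ 2)) / (m₀ * R ^ 2) := by
  subst hK hP hQ
  have hscale : R ^ 2 / (4 * c ^ 2) ≠ 0 := by positivity
  rw [eq_sqrt_div_iff_sq_mul_eq hℓ (by positivity) (by positivity),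
    carriage_condition_eq m m₀ J J₂ R c ℓ hc.ne', mul_eq_zero_iff_left hscale, sub_eq_zero]
end

section
/- Fix real constants ω, Ω, φ₀, θ₀ and set φ(t) = φ₀ + ωt and θ(t) = θ₀ + Ωt. Let x, y : ℝ → ℝ be functions such that for every t ∈ ℝ, x has derivative Ω·cos(φ(t)) at t and y has derivative Ω·sin(φ(t)) at t. Define the Lagrangian L̂ : ℝ⁴ × ℝ⁴ → ℝ by L̂((x, y, θ, φ), (vx, vy, vθ, vφ)) = (1/4)vθ² + (1/8)vφ² − (1/2)(vx² + vy²) + vθ(vx·cos φ + vy·sin φ). Then the curve γ(t) = (x(t), y(t), θ(t), φ(t)) satisfies the Euler–Lagrange equations of L̂: for each coordinate direction e of ℝ⁴ and each t ∈ ℝ, the function s ↦ D₂L̂(γ(s), γ'(s))(e) (the Fréchet derivative of L̂ in its velocity argument, applied to e) has derivative at t equal to D₁L̂(γ(t), γ'(t))(e) (the Fréchet derivative of L̂ in its position argument, applied to e). -/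
/-!
Along a rolling-disk trajectory the velocity lies in the constraint distribution `D`,
`vx = vθ cos φ`, `vy = vθ sin φ`. On `D` the position derivative of `L̂`,
`vθ (vy cos φ - vx sin φ)`, vanishes, and the momentum `∂L̂/∂v` reduces to
`(0, 0, 3/2 vθ, 1/4 vφ)` by `cos² + sin² = 1`. Since `θ̇ = Ω` and `φ̇ = ω` are constant,
the momentum along the trajectory is constant, so both sides of the Euler–Lagrange
equations are zero.
-/

/-- The quadratic Lagrangian `L̂` of [BFM] for the vertically rolling disk (M = R = 1),
in coordinates `(x, y, θ, φ) = (q 0, q 1, q 2, q 3)` and velocities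
`(vx, vy, vθ, vφ) = (v 0, v 1, v 2, v 3)`. -/
noncomputable def Lhat (q v : Fin 4 → ℝ) : ℝ :=
  (1 / 4) * (v 2) ^ 2 + (1 / 8) * (v 3) ^ 2 - (1 / 2) * ((v 0) ^ 2 + (v 1) ^ 2)
    + v 2 * (v 0 * Real.cos (q 3) + v 1 * Real.sin (q 3))

open Real

/-- Membership in the constraint distribution `D` of the rolling disk. -/
def IsRollingVelocity (q v : Fin 4 → ℝ) : Prop :=
  v 0 = v 2 * cos (q 3) ∧ v 1 = v 2 * sin (q 3)

namespace Lhat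

theorem fderiv_velocity_apply (q v w : Fin 4 → ℝ) :
    fderiv ℝ (Lhat q) v w =
      (v 2 * cos (q 3) - v 0) * w 0 + (v 2 * sin (q 3) - v 1) * w 1
        + (1 / 2 * v 2 + v 0 * cos (q 3) + v 1 * sin (q 3)) * w 2 + 1 / 4 * v 3 * w 3 := by
  unfold Lhat
  simp (disch := fun_prop) [fderiv_fun_add, fderiv_fun_sub, fderiv_fun_mul, fderiv_fun_pow,
    (hasFDerivAt_apply _ _).fderiv]
  ring

theorem fderiv_position_apply (q v w : Fin 4 → ℝ) :
    fderiv ℝ (fun q => Lhat q v) q w = v 2 * (v 1 * cos (q 3) - v 0 * sin (q 3)) * w 3 := by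
  unfold Lhat
  simp (disch := fun_prop) [fderiv_fun_add, fderiv_fun_mul, (hasFDerivAt_apply _ _).fderiv]
  ring

theorem fderiv_velocity_apply_of_isRollingVelocity {q v : Fin 4 → ℝ}
    (hv : IsRollingVelocity q v) (w : Fin 4 → ℝ) :
    fderiv ℝ (Lhat q) v w = 3 / 2 * v 2 * w 2 + 1 / 4 * v 3 * w 3 := by
  obtain ⟨hv₀, hv₁⟩ := hv
  rw [fderiv_velocity_apply, hv₀, hv₁]
  linear_combination v 2 * w 2 * sin_sq_add_cos_sq (q 3)

theorem fderiv_position_eq_zero_of_isRollingVelocity {q v : Fin 4 → ℝ}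
    (hv : IsRollingVelocity q v) : fderiv ℝ (fun q => Lhat q v) q = 0 := by
  obtain ⟨hv₀, hv₁⟩ := hv
  ext w
  simp only [fderiv_position_apply, hv₀, hv₁, zero_apply]
  ring

end Lhat

theorem rolling_trajectory_velocity_eq {ω Ω φ₀ θ₀ : ℝ} {x y : ℝ → ℝ}
    (hx : ∀ t : ℝ, HasDerivAt x (Ω * cos (φ₀ + ω * t)) t)
    (hy : ∀ t : ℝ, HasDerivAt y (Ω * sin (φ₀ + ω * t)) t)
    {γ : ℝ → Fin 4 → ℝ} (hγ : ∀ t : ℝ, γ t = ![x t, y t, θ₀ + Ω * t, φ₀ + ω * t])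
    {v : Fin 4 → ℝ} {t : ℝ} (hv : HasDerivAt γ v t) :
    v = ![Ω * cos (φ₀ + ω * t), Ω * sin (φ₀ + ω * t), Ω, ω] := by
  refine hv.unique (hasDerivAt_pi.2 fun j => ?_)
  obtain rfl : γ = fun t => ![x t, y t, θ₀ + Ω * t, φ₀ + ω * t] := funext hγ
  fin_cases j
  · exact hx t
  · exact hy t
  · simpa using ((hasDerivAt_id t).const_mul Ω).const_add θ₀
  · simpa using ((hasDerivAt_id t).const_mul ω).const_add φ₀

/-- Section 8.1 of the paper: every nonholonomic trajectory of the vertically rolling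
disk (constant `θ̇ = Ω`, constant `φ̇ = ω`, `ẋ = Ω cos φ`, `ẏ = Ω sin φ`) satisfies the
Euler–Lagrange equations of the quadratic Lagrangian `L̂`. -/
theorem rolling_disk_trajectory_satisfies_EL
    (ω Ω φ₀ θ₀ : ℝ) (x y : ℝ → ℝ)
    (hx : ∀ t : ℝ, HasDerivAt x (Ω * Real.cos (φ₀ + ω * t)) t)
    (hy : ∀ t : ℝ, HasDerivAt y (Ω * Real.sin (φ₀ + ω * t)) t)
    (γ γ' : ℝ → Fin 4 → ℝ)
    (hγ : ∀ t : ℝ, γ t = ![x t, y t, θ₀ + Ω * t, φ₀ + ω * t])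
    (hγ' : ∀ t : ℝ, HasDerivAt γ (γ' t) t) :
    ∀ (i : Fin 4) (t : ℝ),
      HasDerivAt
        (fun s : ℝ => (fderiv ℝ (fun v : Fin 4 → ℝ => Lhat (γ s) v) (γ' s)) (Pi.single i 1))
        ((fderiv ℝ (fun q : Fin 4 → ℝ => Lhat q (γ' t)) (γ t)) (Pi.single i 1)) t := by
  intro i t
  have hvel (s : ℝ) := rolling_trajectory_velocity_eq hx hy hγ (hγ' s)
  have hrolling (s : ℝ) : IsRollingVelocity (γ s) (γ' s) := by
    simp [IsRollingVelocity, hvel s, hγ s]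
  have hmomentum : (fun s => fderiv ℝ (Lhat (γ s)) (γ' s) (Pi.single i 1)) =
      fun _ => 3 / 2 * Ω * Pi.single (M := fun _ => ℝ) i 1 2
        + 1 / 4 * ω * Pi.single (M := fun _ => ℝ) i 1 3 := by
    funext s
    rw [Lhat.fderiv_velocity_apply_of_isRollingVelocity (hrolling s), hvel s]
    simp
  rw [Lhat.fderiv_position_eq_zero_of_isRollingVelocity (hrolling t),
    zero_apply, hmomentum]
  exact hasDerivAt_const t _
end

section
/- Let A : Matrix (Fin 2) (Fin 2) ℝ be the diagonal matrix with diagonal entries 3/2 and 1/4, and for φ ∈ ℝ let B(φ) : Matrix (Fin 2) (Fin 2) ℝ be the matrix with first row (−3cos φ, −3sin φ) and second row (0, 0). Then for every real α > 6 and every φ ∈ ℝ, the block matrix Matrix.fromBlocks A (B φ) (B φ)ᵀ (α • (1 : Matrix (Fin 2) (Fin 2) ℝ)) is positive definite. -/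
open Matrix
open scoped ComplexOrder

/-!
By the Schur complement, `ĝ` is positive definite iff `α • 1 - Bᵀ A⁻¹ B` is. Here
`Bᵀ A⁻¹ B = 6 v vᵀ` with `v = (cos φ, sin φ)` a unit vector, which has eigenvalues `0` and `6`;
by Cauchy–Schwarz `α • 1 - 6 v vᵀ` is positive definite once `α > 6`.
-/

theorem Matrix.PosDef.fromBlocks₁₁_posDef_iff {m n 𝕜 : Type*} [Fintype m] [Fintype n]
    [DecidableEq m] [DecidableEq n] [RCLike 𝕜] {A : Matrix m m 𝕜} (B : Matrix m n 𝕜)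
    (D : Matrix n n 𝕜) (hA : A.PosDef) :
    (fromBlocks A B Bᴴ D).PosDef ↔ (D - Bᴴ * A⁻¹ * B).PosDef := by
  have := hA.isUnit.invertible
  have hdet : (fromBlocks A B Bᴴ D).det = A.det * (D - Bᴴ * A⁻¹ * B).det := by
    rw [det_fromBlocks₁₁, invOf_eq_nonsing_inv]
  constructor
  · intro h
    rw [((PosDef.fromBlocks₁₁ B D hA).mp h.posSemidef).posDef_iff_det_ne_zero]
    exact right_ne_zero_of_mul (hdet ▸ h.det_pos.ne')
  · intro h
    rw [((PosDef.fromBlocks₁₁ B D hA).mpr h.posSemidef).posDef_iff_det_ne_zero, hdet]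
    exact mul_ne_zero hA.det_pos.ne' h.det_pos.ne'

theorem Matrix.posDef_smul_one_sub_smul_vecMulVec {n : Type*} [Fintype n] [DecidableEq n]
    {v : n → ℝ} {c α : ℝ} (hc : 0 ≤ c) (h : c * (v ⬝ᵥ v) < α) :
    (α • 1 - c • vecMulVec v v).PosDef := by
  have hherm : (α • 1 - c • vecMulVec v v).IsHermitian := by
    ext i j
    simp [vecMulVec_apply, one_apply, eq_comm, mul_comm]
  refine .of_dotProduct_mulVec_pos hherm fun x hx => ?_
  have hx₀ : 0 < x ⬝ᵥ x := by simpa using dotProduct_star_self_pos_iff.mpr hx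
  have hcs : (v ⬝ᵥ x) ^ 2 ≤ (v ⬝ᵥ v) * (x ⬝ᵥ x) := by
    simpa [dotProduct, sq] using Finset.sum_mul_sq_le_sq_mul_sq Finset.univ v x
  have hq : star x ⬝ᵥ ((α • 1 - c • vecMulVec v v) *ᵥ x) =
      α * (x ⬝ᵥ x) - c * (v ⬝ᵥ x) ^ 2 := by
    simp [sub_mulVec, smul_mulVec, vecMulVec_mulVec, dotProduct_comm x v, sq]
  rw [hq]
  nlinarith [mul_le_mul_of_nonneg_left hcs hc]

theorem rollingDisk_conjTranspose_mul_inv_mul (φ : ℝ) :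
    (!![-3 * Real.cos φ, -3 * Real.sin φ; 0, 0])ᴴ * (diagonal ![(3 : ℝ) / 2, 1 / 4])⁻¹ *
        !![-3 * Real.cos φ, -3 * Real.sin φ; 0, 0] =
      (6 : ℝ) • vecMulVec ![Real.cos φ, Real.sin φ] ![Real.cos φ, Real.sin φ] := by
  have hinv : (diagonal ![(3 : ℝ) / 2, 1 / 4])⁻¹ = diagonal ![2 / 3, 4] := by
    refine inv_eq_left_inv ?_
    rw [diagonal_mul_diagonal, ← diagonal_one]
    congr 1
    ext i
    fin_cases i <;> norm_num
  rw [hinv, conjTranspose_eq_transpose_of_trivial]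
  ext i j
  fin_cases i <;> fin_cases j <;> simp [mul_apply, Fin.sum_univ_two] <;> ring

/-- Section 8.1 of the paper: for the vertically rolling disk with `M = R = 1`, the
block matrix `ĝ = [[A, B(φ)], [B(φ)ᵀ, αI]]` with `A = diag(3/2, 1/4)` and
`B(φ) = [[-3cos φ, -3 sin φ], [0, 0]]` is positive definite for every `α > 6`. -/
theorem rolling_disk_metric_posDef :
    ∀ α > (6 : ℝ), ∀ φ : ℝ,
      (Matrix.fromBlocks
        (Matrix.diagonal ![(3 : ℝ) / 2, 1 / 4])
        (!![-3 * Real.cos φ, -3 * Real.sin φ; 0, 0])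
        (!![-3 * Real.cos φ, -3 * Real.sin φ; 0, 0])ᵀ
        (α • (1 : Matrix (Fin 2) (Fin 2) ℝ))).PosDef := by
  intro α hα φ
  have hA : (diagonal ![(3 : ℝ) / 2, 1 / 4]).PosDef :=
    .diagonal fun i => by fin_cases i <;> norm_num
  have hunit : ![Real.cos φ, Real.sin φ] ⬝ᵥ ![Real.cos φ, Real.sin φ] = 1 := by
    simp [dotProduct, Fin.sum_univ_two, ← sq, Real.cos_sq_add_sin_sq]
  rw [← conjTranspose_eq_transpose_of_trivial, hA.fromBlocks₁₁_posDef_iff,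
    rollingDisk_conjTranspose_mul_inv_mul]
  exact posDef_smul_one_sub_smul_vecMulVec (by norm_num) (by linarith [hunit])
end
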